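/- Every thin (κ,λ)-list is κ-slender (and hence μ-slender for every uncountable μ ≤ κ). -/

import Mathlib

universe u

/-- `C` is a closed unbounded subset of `P_κ(B)`, the subsets of `B` of size `< κ`:
every member of `C` is a subset of `B` of size `< κ`, `C` is cofinal (unbounded) in
`(P_κ(B), ⊆)`, and `C` is closed under unions of nonempty `⊆`-chains of length `< κ`. -/
def IsClubIn {β : Type u} (κ : Cardinal.{u}) (B : Set β) (C : Set (Set β)) : Prop :=
  (∀ A ∈ C, A ⊆ B ∧ Cardinal.mk ↥A < κ) ∧
  (∀ A : Set β, A ⊆ B → Cardinal.mk ↥A < κ → ∃ D ∈ C, A ⊆ D) ∧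
  (∀ D : Set (Set β), D ⊆ C → D.Nonempty → IsChain (· ⊆ ·) D →
    Cardinal.mk ↥D < κ → ⋃₀ D ∈ C)

/-- A `(κ,λ)`-list `⟨d x : x ∈ P_κ(λ)⟩` (given by a function `d` on subsets of `λ`,
with `d x ⊆ x` for `x ∈ P_κ(λ)`) is *thin* if on a club of `y ∈ P_κ(λ)` the set
`{ d x ∩ y : y ⊆ x }` has size `< κ`. -/
def IsThinList (κ : Cardinal.{u}) (lam : Ordinal.{u})
    (d : Set lam.ToType → Set lam.ToType) : Prop :=
  ∃ C : Set (Set lam.ToType), IsClubIn κ Set.univ C ∧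
    ∀ y ∈ C, Cardinal.mk ↥{s : Set lam.ToType |
      ∃ x : Set lam.ToType, Cardinal.mk ↥x < κ ∧ y ⊆ x ∧ s = d x ∩ y} < κ

/-- A `(κ,λ)`-list is *`μ`-slender* if (for all sufficiently large `θ`) there is a club of
models `M ∈ P_κ(H(θ))` such that for all `y ∈ M ∩ P_μ(λ)` we have `d (M ∩ λ) ∩ y ∈ M`.
Here the relevant part of `H(θ)` is modelled by `λ ⊕ P(λ)`, so that a model `M` is a small
set of ordinals `< λ` (left summands) and subsets of `λ` (right summands); `M ∩ λ` is the
set of left summands of `M`, and membership `∈ M` is membership of the right summands. -/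
def IsSlenderList (μ κ : Cardinal.{u}) (lam : Ordinal.{u})
    (d : Set lam.ToType → Set lam.ToType) : Prop :=
  ∃ C : Set (Set (lam.ToType ⊕ Set lam.ToType)), IsClubIn κ Set.univ C ∧
    ∀ M ∈ C, ∀ y : Set lam.ToType, Sum.inr y ∈ M → Cardinal.mk ↥y < μ →
      Sum.inr (d {o : lam.ToType | Sum.inl o ∈ M} ∩ y) ∈ M

/-!
Given `y ∈ P_κ(λ)`, choose `z ⊇ y` in the thinness club. A small model `M` containing `z` and
the fewer than `κ` sets `t ∩ y` with `t` a trace `d x ∩ z` contains `d (M ∩ λ) ∩ y`, since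
`M ∩ λ` is itself a small `x ⊇ z`. Closing under these witnesses for every small `y ∈ M` is a
club condition on `P_κ(λ ⊕ P(λ))` because `κ` is regular and uncountable.
-/

open Cardinal Set

section Clubs

variable {γ : Type u} {κ : Cardinal.{u}}

theorem mk_sUnion_lt_of_isRegular (hκ : κ.IsRegular) {D : Set (Set γ)} (hD : #D < κ)
    (hsmall : ∀ A ∈ D, #A < κ) : #(⋃₀ D) < κ := by
  rw [sUnion_eq_iUnion, card_iUnion_lt_iff_forall_of_isRegular hκ hD]
  exact fun A => hsmall A A.2

variable {ι : Type u} {e : ι → γ} {G : ι → Set γ}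

def closeStep (e : ι → γ) (G : ι → Set γ) (A : Set γ) : Set γ :=
  A ∪ ⋃ i ∈ e ⁻¹' A, G i

theorem mk_closeStep_lt (hκ : κ.IsRegular) (he : e.Injective) (hG : ∀ i, #(G i) < κ)
    {A : Set γ} (hA : #A < κ) : #(closeStep e G A) < κ := by
  refine (mk_union_le _ _).trans_lt (add_lt_of_lt hκ.aleph0_le hA ?_)
  rw [card_biUnion_lt_iff_forall_of_isRegular hκ
    ((mk_preimage_of_injective e A he).trans_lt hA)]
  exact fun i _ => hG i

/-- Closing under `G` takes `ω` rounds, and `ω < cf κ = κ`. -/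
theorem isClubIn_setOf_closedUnder (hκ : κ.IsRegular) (hκω : ℵ₀ < κ) (he : e.Injective)
    (hG : ∀ i, #(G i) < κ) :
    IsClubIn κ univ {M : Set γ | #M < κ ∧ ∀ i, e i ∈ M → G i ⊆ M} := by
  refine ⟨fun M hM => ⟨subset_univ M, hM.1⟩, fun A _ hA => ?_,
    fun D hDC _ _ hD => ⟨?_, ?_⟩⟩
  · set F : ℕ → Set γ := fun n => (closeStep e G)^[n] A
    have hF : ∀ n, #(F n) < κ := fun n => by
      induction n with
      | zero => exact hA
      | succ n ih =>
        simpa only [F, Function.iterate_succ_apply'] using mk_closeStep_lt hκ he hG ih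
    refine ⟨⋃ n, F n, ⟨?_, fun i hi => ?_⟩, subset_iUnion F 0⟩
    · rw [← sUnion_range]
      refine mk_sUnion_lt_of_isRegular hκ ?_ (by rintro _ ⟨n, rfl⟩; exact hF n)
      exact ((le_aleph0_iff_set_countable.2 (countable_range F))).trans_lt hκω
    · obtain ⟨n, hn⟩ := mem_iUnion.1 hi
      refine Subset.trans ?_ (subset_iUnion F (n + 1))
      simp only [F, Function.iterate_succ_apply']
      exact subset_union_of_subset_right (subset_biUnion_of_mem (u := G) hn) _
  · exact mk_sUnion_lt_of_isRegular hκ hD fun A hA => (hDC hA).1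
  · rintro i ⟨B, hB, hiB⟩
    exact ((hDC hB).2 i hiB).trans (subset_sUnion_of_mem hB)

end Clubs

section Lists

variable {α : Type u}

def traces (κ : Cardinal.{u}) (d : Set α → Set α) (y : Set α) : Set (Set α) :=
  {s | ∃ x : Set α, #x < κ ∧ y ⊆ x ∧ s = d x ∩ y}

variable {κ : Cardinal.{u}}

theorem inr_inter_mem_of_traces_subset {d : Set α → Set α} {y z : Set α} (hyz : y ⊆ z)
    {M : Set (α ⊕ Set α)} (hMκ : #M < κ) (hzM : Sum.inl '' z ⊆ M)
    (htrM : Sum.inr '' ((· ∩ y) '' traces κ d z) ⊆ M) :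
    Sum.inr (d (Sum.inl ⁻¹' M) ∩ y) ∈ M := by
  set x := Sum.inl ⁻¹' M
  have hxκ : #x < κ := (mk_preimage_of_injective _ M Sum.inl_injective).trans_lt hMκ
  have hzx : z ⊆ x := image_subset_iff.1 hzM
  have htrace : d x ∩ z ∈ traces κ d z := ⟨x, hxκ, hzx, rfl⟩
  have hcut : d x ∩ z ∩ y = d x ∩ y := by
    rw [inter_assoc, inter_eq_right.2 hyz]
  exact htrM ⟨_, ⟨_, htrace, rfl⟩, congrArg Sum.inr hcut⟩

theorem exists_small_forces_inr_inter_mem (hκ : ℵ₀ ≤ κ) {d : Set α → Set α}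
    {y z : Set α} (hyz : y ⊆ z) (hzκ : #z < κ) (htrκ : #(traces κ d z) < κ) :
    ∃ W : Set (α ⊕ Set α), #W < κ ∧
      ∀ M, W ⊆ M → #M < κ → Sum.inr (d (Sum.inl ⁻¹' M) ∩ y) ∈ M := by
  refine ⟨Sum.inl '' z ∪ Sum.inr '' ((· ∩ y) '' traces κ d z), ?_, fun M hWM hMκ => ?_⟩
  · refine (mk_union_le _ _).trans_lt (add_lt_of_lt hκ ?_ ?_)
    · exact mk_image_le.trans_lt hzκ
    · exact (mk_image_le.trans mk_image_le).trans_lt htrκ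
  · exact inr_inter_mem_of_traces_subset hyz hMκ (subset_union_left.trans hWM)
      (subset_union_right.trans hWM)

end Lists

theorem IsSlenderList.mono {μ ν κ : Cardinal.{u}} {lam : Ordinal.{u}}
    {d : Set lam.ToType → Set lam.ToType} (hν : IsSlenderList ν κ lam d) (hμν : μ ≤ ν) :
    IsSlenderList μ κ lam d := by
  obtain ⟨C, hC, hslender⟩ := hν
  exact ⟨C, hC, fun M hM y hy hyμ => hslender M hM y hy (hyμ.trans_le hμν)⟩

theorem thin_implies_slender_general (κ : Cardinal.{u}) (hreg : κ.IsRegular)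
    (hunc : Cardinal.aleph0 < κ) (lam : Ordinal.{u})
    (d : Set lam.ToType → Set lam.ToType)
    (hthin : IsThinList κ lam d) :
    IsSlenderList κ κ lam d ∧
      ∀ μ : Cardinal.{u}, Cardinal.aleph0 < μ → μ ≤ κ → IsSlenderList μ κ lam d := by
  obtain ⟨C, ⟨hCsmall, hCunb, -⟩, hthinC⟩ := hthin
  have hforce : ∀ y : {y : Set lam.ToType // #y < κ},
      ∃ W : Set (lam.ToType ⊕ Set lam.ToType), #W < κ ∧
        ∀ M, W ⊆ M → #M < κ → Sum.inr (d (Sum.inl ⁻¹' M) ∩ y.1) ∈ M := by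
    rintro ⟨y, hyκ⟩
    obtain ⟨z, hzC, hyz⟩ := hCunb y (subset_univ y) hyκ
    exact exists_small_forces_inr_inter_mem hreg.aleph0_le hyz (hCsmall z hzC).2
      (hthinC z hzC)
  choose W hWκ hW using hforce
  have hslender : IsSlenderList κ κ lam d :=
    ⟨_, isClubIn_setOf_closedUnder hreg hunc
      (Sum.inr_injective.comp Subtype.val_injective) hWκ,
      fun M hM y hy hyκ => hW ⟨y, hyκ⟩ M (hM.2 ⟨y, hyκ⟩ hy) hM.1⟩
  exact ⟨hslender, fun μ _ hμκ => hslender.mono hμκ⟩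

/-- Every thin `(κ,λ)`-list is `κ`-slender, and hence `μ`-slender for
every uncountable `μ ≤ κ`. -/
theorem thin_implies_slender (κ : Cardinal.{u}) (hreg : κ.IsRegular)
    (hunc : Cardinal.aleph0 < κ) (lam : Ordinal.{u}) (hkl : κ.ord ≤ lam)
    (d : Set lam.ToType → Set lam.ToType) (hd : ∀ x : Set lam.ToType, d x ⊆ x)
    (hthin : IsThinList κ lam d) :
    IsSlenderList κ κ lam d ∧
      ∀ μ : Cardinal.{u}, Cardinal.aleph0 < μ → μ ≤ κ → IsSlenderList μ κ lam d :=
  thin_implies_slender_general κ hreg hunc lam d hthin
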